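/- Let f, g : {0,1}^{m+1} → Z_q form a q-ary Golay array pair of size 2^(m+1), and define f_0(x) = f(x,0), f_1(x) = f(x,1), g_0(x) = g(x,0), g_1(x) = g(x,1) for x ∈ {0,1}^m, with generating functions F_0, F_1, G_0, G_1 ∈ ℂ[z_1,…,z_m]. Then for every z ∈ ℂ^m with all coordinates nonzero, F_0(z)·F̄_1(z⁻¹) + G_0(z)·Ḡ_1(z⁻¹) = 0; equivalently, for every shift τ ∈ {−1,0,1}^m, the aperiodic cross-correlations satisfy C_{f_0,f_1}(τ) + C_{g_0,g_1}(τ) = 0. -/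

import Mathlib

/-! The shift (τ, −1) of a pair of arrays of size 2^(m+1) only compares the slice with last
coordinate 0 against the slice with last coordinate 1, so the Golay condition at (τ, −1) is
exactly C_{f₀,f₁}(τ) + C_{g₀,g₁}(τ) = 0. Since ζ^a · conj ζ^b = ζ^(a−b), multiplying out shows that
F₀(z)·F̄₁(z⁻¹) is the Laurent polynomial Σ_τ C_{f₀,f₁}(τ) z^τ, and the generating-function
identity follows coefficientwise. -/

open scoped BigOperators

/-- ζ = exp(2πi/q). -/
noncomputable def zeta (q : ℕ) : ℂ := Complex.exp (2 * Real.pi * Complex.I / q)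

/-- ζ^c for c ∈ Z_q (well defined since ζ^q = 1). -/
noncomputable def zetaPow (q : ℕ) (c : ZMod q) : ℂ := zeta q ^ c.val

/-- Aperiodic cross-correlation of arrays u, v at shift τ:
    C_{u,v}(τ) = Σ_{x, x+τ ∈ {0,1}^m} ζ^{u(x+τ) - v(x)}. -/
noncomputable def corr (q m : ℕ) (u v : (Fin m → Fin 2) → ZMod q) (τ : Fin m → ℤ) : ℂ :=
  ∑ y : Fin m → Fin 2, ∑ x : Fin m → Fin 2,
    if ∀ i, ((y i : ℕ) : ℤ) - ((x i : ℕ) : ℤ) = τ i then zetaPow q (u y - v x) else 0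

/-- (f, g) is a Golay array pair of size 2^(m). -/
def IsGAP (q m : ℕ) (f g : (Fin m → Fin 2) → ZMod q) : Prop :=
  ∀ τ : Fin m → ℤ, (∀ i, τ i = -1 ∨ τ i = 0 ∨ τ i = 1) → τ ≠ 0 →
    corr q m f f τ + corr q m g g τ = 0

/-- Generating function of an array, as a function on ℂ^m. -/
noncomputable def genFun (q m : ℕ) (f : (Fin m → Fin 2) → ZMod q) (z : Fin m → ℂ) : ℂ :=
  ∑ x : Fin m → Fin 2, zetaPow q (f x) * ∏ i, (z i) ^ ((x i : ℕ))

/-- Coefficient-wise conjugate of the generating function, as a function on ℂ^m. -/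
noncomputable def genFunConj (q m : ℕ) (f : (Fin m → Fin 2) → ZMod q) (z : Fin m → ℂ) : ℂ :=
  ∑ x : Fin m → Fin 2, (starRingEnd ℂ) (zetaPow q (f x)) * ∏ i, (z i) ^ ((x i : ℕ))

/-- Generating function of an array, as a multivariate polynomial. -/
noncomputable def genPoly (q m : ℕ) (f : (Fin m → Fin 2) → ZMod q) :
    MvPolynomial (Fin m) ℂ :=
  ∑ x : Fin m → Fin 2, MvPolynomial.C (zetaPow q (f x)) * ∏ i, (MvPolynomial.X i) ^ ((x i : ℕ))

/-- Generating function of an array on a subset S of the coordinates. -/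
noncomputable def genPolyOn (q m : ℕ) (S : Finset (Fin m)) (a : (↥S → Fin 2) → ZMod q) :
    MvPolynomial (Fin m) ℂ :=
  ∑ u : ↥S → Fin 2, MvPolynomial.C (zetaPow q (a u)) * ∏ k : ↥S, (MvPolynomial.X (k : Fin m)) ^ ((u k : ℕ))

/-- (f, g) is a standard Golay array pair of size 2^(m). -/
def IsStandard (q m : ℕ) (hm : 0 < m) (f g : (Fin m → Fin 2) → ZMod q) : Prop :=
  ∃ π : Equiv.Perm (Fin m), ∃ c0 c' : ZMod q, ∃ c : Fin m → ZMod q,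
    (∀ x : Fin m → Fin 2,
        f x = ((q / 2 : ℕ) : ZMod q) *
            (∑ k : Fin m, if h : (k : ℕ) + 1 < m then
                ((x (π k) : ℕ) : ZMod q) * ((x (π ⟨(k : ℕ) + 1, h⟩) : ℕ) : ZMod q) else 0)
          + (∑ k : Fin m, c k * ((x k : ℕ) : ZMod q)) + c0)
    ∧ (∀ x : Fin m → Fin 2,
        g x = f x + ((q / 2 : ℕ) : ZMod q) * ((x (π ⟨0, hm⟩) : ℕ) : ZMod q) + c')

section RootsOfUnity

variable {q : ℕ}

lemma zetaPow_ne_zero (a : ZMod q) : zetaPow q a ≠ 0 :=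
  pow_ne_zero _ (Complex.exp_ne_zero _)

lemma zeta_pow_self (hq : 0 < q) : zeta q ^ q = 1 :=
  (Complex.isPrimitiveRoot_exp q hq.ne').pow_eq_one

lemma zetaPow_add (hq : 0 < q) (a b : ZMod q) :
    zetaPow q (a + b) = zetaPow q a * zetaPow q b := by
  have : NeZero q := ⟨hq.ne'⟩
  rw [zetaPow, zetaPow, zetaPow, ZMod.val_add, ← pow_eq_pow_mod _ (zeta_pow_self hq), pow_add]

lemma conj_zetaPow (hq : 0 < q) (a : ZMod q) :
    starRingEnd ℂ (zetaPow q a) = (zetaPow q a)⁻¹ := by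
  have hpow : zetaPow q a ^ q = 1 := by
    rw [zetaPow, ← pow_mul, mul_comm, pow_mul, zeta_pow_self hq, one_pow]
  exact (Complex.inv_eq_conj (Complex.norm_eq_one_of_pow_eq_one hpow hq.ne')).symm

lemma zetaPow_mul_conj (hq : 0 < q) (a b : ZMod q) :
    zetaPow q a * starRingEnd ℂ (zetaPow q b) = zetaPow q (a - b) := by
  rw [conj_zetaPow hq, ← div_eq_mul_inv, div_eq_iff (zetaPow_ne_zero b), ← zetaPow_add hq,
    sub_add_cancel]

end RootsOfUnity

lemma Fintype.sum_pi_fin_succ {α M : Type*} [Fintype α] [AddCommMonoid M] (m : ℕ)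
    (F : (Fin (m + 1) → α) → M) :
    ∑ y : Fin (m + 1) → α, F y = ∑ y : Fin m → α, ∑ b : α, F (Fin.snoc y b) := by
  rw [← Fintype.sum_equiv (Fin.snocEquiv fun _ => α) _ _ (fun _ => rfl), Fintype.sum_prod_type,
    Finset.sum_comm]
  rfl

lemma corr_snoc_neg_one {q m : ℕ} (u v : (Fin (m + 1) → Fin 2) → ZMod q) (τ : Fin m → ℤ) :
    corr q (m + 1) u v (Fin.snoc τ (-1))
      = corr q m (fun x => u (Fin.snoc x 0)) (fun x => v (Fin.snoc x 1)) τ := by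
  simp only [corr, Fintype.sum_pi_fin_succ, Fin.sum_univ_two, Fin.forall_fin_succ',
    Fin.snoc_castSucc, Fin.snoc_last]
  norm_num

lemma IsGAP.corr_slices_add_eq_zero {q m : ℕ} {f g : (Fin (m + 1) → Fin 2) → ZMod q}
    (hGAP : IsGAP q (m + 1) f g) (τ : Fin m → ℤ) (hτ : ∀ i, τ i = -1 ∨ τ i = 0 ∨ τ i = 1) :
    corr q m (fun x => f (Fin.snoc x 0)) (fun x => f (Fin.snoc x 1)) τ
      + corr q m (fun x => g (Fin.snoc x 0)) (fun x => g (Fin.snoc x 1)) τ = 0 := by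
  rw [← corr_snoc_neg_one, ← corr_snoc_neg_one]
  refine hGAP _ (Fin.forall_fin_succ'.2 ⟨?_, ?_⟩) fun h => ?_
  · simpa only [Fin.snoc_castSucc] using hτ
  · simp only [Fin.snoc_last, true_or]
  · simpa only [Fin.snoc_last, Pi.zero_apply, neg_eq_zero, one_ne_zero]
      using congrFun h (Fin.last m)

section GeneratingFunctions

variable {q m : ℕ}

lemma genFun_mul_genFunConj_inv (hq : 0 < q) (u v : (Fin m → Fin 2) → ZMod q)
    {z : Fin m → ℂ} (hz : ∀ i, z i ≠ 0) :
    genFun q m u z * genFunConj q m v (fun i => (z i)⁻¹)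
      = ∑ y : Fin m → Fin 2, ∑ x : Fin m → Fin 2,
          zetaPow q (u y - v x) * ∏ i, z i ^ (((y i : ℕ) : ℤ) - ((x i : ℕ) : ℤ)) := by
  rw [genFun, genFunConj, Finset.sum_mul_sum]
  refine Finset.sum_congr rfl fun y _ => Finset.sum_congr rfl fun x _ => ?_
  rw [mul_mul_mul_comm, zetaPow_mul_conj hq, ← Finset.prod_mul_distrib]
  congr 1
  refine Finset.prod_congr rfl fun i _ => ?_
  rw [zpow_sub₀ (hz i), zpow_natCast, zpow_natCast, inv_pow, div_eq_mul_inv]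

lemma genFun_mul_genFunConj_inv_eq_sum_corr (hq : 0 < q) (u v : (Fin m → Fin 2) → ZMod q)
    {z : Fin m → ℂ} (hz : ∀ i, z i ≠ 0) :
    genFun q m u z * genFunConj q m v (fun i => (z i)⁻¹)
      = ∑ τ ∈ Fintype.piFinset fun _ => Finset.Icc (-1 : ℤ) 1,
          corr q m u v τ * ∏ i, z i ^ τ i := by
  rw [genFun_mul_genFunConj_inv hq u v hz, eq_comm]
  simp only [corr, Finset.sum_mul, ite_mul, zero_mul]
  rw [Finset.sum_comm]
  refine Finset.sum_congr rfl fun y _ => ?_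
  rw [Finset.sum_comm]
  refine Finset.sum_congr rfl fun x _ => ?_
  simp only [← funext_iff]
  rw [Finset.sum_ite_eq, if_pos]
  simp only [Fintype.mem_piFinset, Finset.mem_Icc]
  intro i
  have := (x i).isLt
  have := (y i).isLt
  omega

end GeneratingFunctions

/-- if (f,g) is a GAP of size 2^(m+1), then
    F₀(z)·F̄₁(z⁻¹) + G₀(z)·Ḡ₁(z⁻¹) = 0 on nonzero z; equivalently the cross-correlations
    satisfy C_{f₀,f₁}(τ) + C_{g₀,g₁}(τ) = 0 for every shift τ. -/
theorem gap_restrictions_crosscorr (q m : ℕ) (hq : 0 < q)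
    (f g : (Fin (m + 1) → Fin 2) → ZMod q) (hGAP : IsGAP q (m + 1) f g) :
    (∀ z : Fin m → ℂ, (∀ i, z i ≠ 0) →
      genFun q m (fun x => f (Fin.snoc x 0)) z
          * genFunConj q m (fun x => f (Fin.snoc x 1)) (fun i => (z i)⁻¹)
        + genFun q m (fun x => g (Fin.snoc x 0)) z
          * genFunConj q m (fun x => g (Fin.snoc x 1)) (fun i => (z i)⁻¹) = 0) ∧
    (∀ τ : Fin m → ℤ, (∀ i, τ i = -1 ∨ τ i = 0 ∨ τ i = 1) →
      corr q m (fun x => f (Fin.snoc x 0)) (fun x => f (Fin.snoc x 1)) τ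
        + corr q m (fun x => g (Fin.snoc x 0)) (fun x => g (Fin.snoc x 1)) τ = 0) := by
  refine ⟨fun z hz => ?_, hGAP.corr_slices_add_eq_zero⟩
  rw [genFun_mul_genFunConj_inv_eq_sum_corr hq _ _ hz,
    genFun_mul_genFunConj_inv_eq_sum_corr hq _ _ hz, ← Finset.sum_add_distrib]
  refine Finset.sum_eq_zero fun τ hτ => ?_
  have hτ_mem : ∀ i, τ i = -1 ∨ τ i = 0 ∨ τ i = 1 := fun i => by
    have := Fintype.mem_piFinset.1 hτ i
    rw [Finset.mem_Icc] at this
    omega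
  rw [← add_mul, hGAP.corr_slices_add_eq_zero τ hτ_mem, zero_mul]
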